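/- Let L be a finite meet-semilattice, G a building set in L, and X ∈ L \ {0̂}. The map φ sending a nonempty nested set S to its join ⋁S is a well-defined order-preserving map from the face poset of N(L,G) to L \ {0̂}, and for every X ∈ L \ {0̂} the preimage φ^{-1}((L \ {0̂})_{≤X}) has contractible order complex. -/

import Mathlib

open scoped BigOperators

variable {L : Type*}

/-- The set of maximal elements of `G` below `X` (the `G`-factors of `X`). -/
def factorsSet [PartialOrder L] (G : Set L) (X : L) : Set L :=
  {g | g ∈ G ∧ g ≤ X ∧ ∀ h ∈ G, h ≤ X → g ≤ h → g = h}

/-- `G` is a building set in the meet-semilattice `L` with minimal element `⊥`: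
every element of `G` is nonminimal, and for every `X ≠ ⊥` there is a poset
isomorphism from the product of the lower intervals of the factors of `X`
to the lower interval of `X`, sending the `g`-th "unit vector" to `g`. -/
def IsBuilding (L : Type*) [PartialOrder L] [OrderBot L] (G : Set L) : Prop :=
  (∀ g ∈ G, g ≠ ⊥) ∧
  ∀ X : L, X ≠ ⊥ →
    ∃ φ : ((g : factorsSet G X) → Set.Icc (⊥ : L) g.1) ≃o Set.Icc (⊥ : L) X,
      ∀ (g : factorsSet G X) (u : (h : factorsSet G X) → Set.Icc (⊥ : L) h.1),
        (u g : L) = g.1 → (∀ h, h ≠ g → (u h : L) = (⊥ : L)) → ((φ u : L) = g.1)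

/-- A finite subset `S ⊆ G` is nested: every antichain in `S` of size at least 2
has a least upper bound in `L` which does not belong to `G`. -/
def IsNested [PartialOrder L] (G : Set L) (S : Finset L) : Prop :=
  ↑S ⊆ G ∧ ∀ A : Finset L, A ⊆ S → IsAntichain (· ≤ ·) (A : Set L) → 2 ≤ A.card →
    ∃ j, IsLUB (A : Set L) j ∧ j ∉ G

/-- The nested set complex, as the collection of its faces. -/
def nestedComplex [PartialOrder L] (G : Set L) : Set (Finset L) := {S | IsNested G S}

/-- The order complex of a poset: the collection of finite chains. -/
def chainComplex (V : Type*) [Preorder V] : Set (Finset V) :=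
  {S | IsChain (· ≤ ·) (S : Set V)}

/-- The order complex of `L \ {⊥}`, with vertex set inside `L`. -/
def orderComplexBot (L : Type*) [PartialOrder L] [OrderBot L] : Set (Finset L) :=
  {S | (S : Set L) ⊆ {x | x ≠ ⊥} ∧ IsChain (· ≤ ·) (S : Set L)}

/-- Geometric realization of an abstract simplicial complex (given by its set of
faces, as finsets of the vertex type `V`): convex combinations of vertices
supported on a face. -/
abbrev geomReal {V : Type*} (K : Set (Finset V)) : Type _ :=
  {f : V → ℝ // (∀ v, 0 ≤ f v) ∧ ∃ s ∈ K, (∀ v, f v ≠ 0 → v ∈ s) ∧ ∑ v ∈ s, f v = 1}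

/-- The subposet of the face poset of the nested set complex consisting of the
nonempty nested sets whose join is `≤ X`. -/
def NestedFiber [PartialOrder L] (G : Set L) (X : L) :=
  {S : Finset L // IsNested G S ∧ S.Nonempty ∧ ∃ j, IsLUB (S : Set L) j ∧ j ≤ X}

instance [PartialOrder L] (G : Set L) (X : L) : PartialOrder (NestedFiber G X) := by
  unfold NestedFiber; infer_instance

/-- The face poset of the nested set complex: nonempty nested sets ordered by inclusion. -/
def NestedFaces [PartialOrder L] (G : Set L) :=
  {S : Finset L // IsNested G S ∧ S.Nonempty}

instance [PartialOrder L] (G : Set L) : PartialOrder (NestedFaces G) := by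
  unfold NestedFaces; infer_instance

/-- The combinatorial blowup of a poset `M` at `X`: elements `Y` (marked `false`)
with `Y ≱ X`, and elements `Ŷ` (marked `true`) with `Y ≱ X` such that `Y ∨ X`
exists; ordered by `Y ≺ Z` iff `Y < Z`, `Ŷ ≺ Ẑ` iff `Y < Z`, `Y ≺ Ẑ` iff `Y ≤ Z`. -/
def Bl {M : Type*} [PartialOrder M] (X : M) :=
  {p : M × Bool // ¬ X ≤ p.1 ∧ (p.2 = true → ∃ j, IsLUB {p.1, X} j)}

noncomputable instance {M : Type*} [PartialOrder M] (X : M) : PartialOrder (Bl X) := by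
  unfold Bl; infer_instance

/-- The atoms of `L`, used as coordinates for the realization of nested set fans. -/
def Atoms (L : Type*) [PartialOrder L] [OrderBot L] := {a : L // IsAtom a}

open Classical in
/-- The characteristic vector of the set of atoms below `X`. -/
noncomputable def charVec [PartialOrder L] [OrderBot L] (X : L) : Atoms L → ℝ :=
  fun a => if a.1 ≤ X then 1 else 0

/-- The polyhedral cone spanned by the characteristic vectors of elements of `S`. -/
noncomputable def coneOf [PartialOrder L] [OrderBot L] (S : Finset L) : Set (Atoms L → ℝ) :=
  {y | ∃ c : L → ℝ, (∀ x, 0 ≤ c x) ∧ y = ∑ x ∈ S, c x • charVec x}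

/-- The fan associated to a building set: the cones spanned by the nested sets. -/
def fanOf [PartialOrder L] [OrderBot L] (G : Set L) : Set (Set (Atoms L → ℝ)) :=
  {C | ∃ S : Finset L, IsNested G S ∧ C = coneOf S}

/-- The cone generated by a ray `v` together with a cone `c`. -/
def rayJoin {E : Type*} [AddCommMonoid E] [Module ℝ E] (v : E) (c : Set E) : Set E :=
  {y | ∃ a : ℝ, ∃ x ∈ c, 0 ≤ a ∧ y = a • v + x}

/-- The stellar subdivision of a fan `F` at the cone `σ` with new ray `v`:
cones not containing `σ` are kept, and each cone `τ ⊇ σ` is replaced by the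
joins of `v` with the faces of `τ` not containing `σ`. -/
def stellarSub {E : Type*} [AddCommMonoid E] [Module ℝ E]
    (F : Set (Set E)) (σ : Set E) (v : E) : Set (Set E) :=
  {τ | τ ∈ F ∧ ¬ σ ⊆ τ} ∪
  {D | ∃ τ ∈ F, σ ⊆ τ ∧ ∃ c ∈ F, c ⊆ τ ∧ ¬ σ ⊆ c ∧ D = rayJoin v c}

/-!
Joins of nonempty nested sets exist: they are the joins of the antichains of maximal elements.
For the fibre over `X ≠ ⊥`, pick a factor `g` of `X`; one exists, since otherwise the lower
interval of `X` would be an empty product. By maximality of `g` in `G ∩ [⊥, X]`, adding `g` to a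
nested set below `X` keeps it nested, so `S ↦ S ∪ {g}` is a monotone self-map of the fibre with
`S ≤ S ∪ {g} ≥ {g}`. Quillen's conical contraction argument then applies: monotone maps
`φ ≤ ψ` of finite posets induce homotopic maps on the realizations of their order complexes, via
the homotopy that pushes the top `t` of the mass of a point along `ψ` and the rest along `φ`.
-/

open Finset Function

section Pushforward

variable {P Q : Type*} [Fintype P]

open Classical in
noncomputable def pushforward (f : P → Q) (μ : P → ℝ) (q : Q) : ℝ :=
  ∑ v with f v = q, μ v

lemma sum_pushforward [Fintype Q] (f : P → Q) (μ : P → ℝ) :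
    ∑ q, pushforward f μ q = ∑ v, μ v := by
  classical
  simp only [pushforward]
  convert sum_fiberwise univ f μ

lemma pushforward_nonneg (f : P → Q) {μ : P → ℝ} (hμ : ∀ v, 0 ≤ μ v) (q : Q) :
    0 ≤ pushforward f μ q :=
  sum_nonneg fun v _ => hμ v

lemma support_pushforward_subset (f : P → Q) (μ : P → ℝ) :
    support (pushforward f μ) ⊆ f '' support μ := by
  classical
  intro q hq
  obtain ⟨v, hv, hμv⟩ := exists_ne_zero_of_sum_ne_zero hq
  exact ⟨v, hμv, (mem_filter.1 hv).2⟩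

lemma continuous_pushforward (f : P → Q) : Continuous (pushforward f) := by
  unfold pushforward
  fun_prop

lemma pushforward_zero (f : P → Q) : pushforward f 0 = 0 := by
  ext q
  simp [pushforward]

lemma pushforward_id : pushforward id = (id : (P → ℝ) → P → ℝ) := by
  classical
  ext μ q
  simp [pushforward, sum_filter]

lemma pushforward_const [DecidableEq Q] (q₀ : Q) {μ : P → ℝ} (hμ : ∑ v, μ v = 1) :
    pushforward (fun _ => q₀) μ = Pi.single q₀ 1 := by
  ext q
  rcases eq_or_ne q q₀ with rfl | hq
  · simp [pushforward, hμ]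
  · simp [pushforward, hq, Ne.symm hq]

end Pushforward

section OrderComplex

lemma IsChain.image_union_image {P Q : Type*} [PartialOrder P] [Preorder Q] {f g : P → Q}
    (hf : Monotone f) (hg : Monotone g) (hfg : f ≤ g) {D U : Set P}
    (hc : IsChain (· ≤ ·) (D ∪ U)) (hDU : ∀ v ∈ D, ∀ w ∈ U, ¬ w < v) :
    IsChain (· ≤ ·) (f '' D ∪ g '' U) := by
  refine isChain_union.2 ⟨hf.isChain_image (hc.mono Set.subset_union_left),
    hg.isChain_image (hc.mono Set.subset_union_right), ?_⟩
  rintro _ ⟨v, hv, rfl⟩ _ ⟨w, hw, rfl⟩ -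
  rcases hc.total (Or.inl hv) (Or.inr hw) with hvw | hwv
  · exact Or.inl ((hf hvw).trans (hfg w))
  · obtain rfl | hlt := hwv.eq_or_lt
    · exact Or.inl (hfg w)
    · exact absurd hlt (hDU v hv w hw)

variable {P Q : Type*} [PartialOrder P] [Fintype P]

lemma geomReal_chainComplex_iff {μ : P → ℝ} :
    ((∀ v, 0 ≤ μ v) ∧
        ∃ s ∈ chainComplex P, (∀ v, μ v ≠ 0 → v ∈ s) ∧ ∑ v ∈ s, μ v = 1) ↔
      (∀ v, 0 ≤ μ v) ∧ ∑ v, μ v = 1 ∧ IsChain (· ≤ ·) (support μ) := by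
  classical
  refine and_congr_right fun _ => ⟨?_, ?_⟩
  · rintro ⟨s, hs, hsupp, hsum⟩
    refine ⟨?_, hs.mono fun v hv => hsupp v hv⟩
    rw [← hsum]
    exact (sum_subset (subset_univ s) fun v _ hv => not_not.1 (mt (hsupp v) hv)).symm
  · rintro ⟨hsum, hc⟩
    refine ⟨univ.filter (· ∈ support μ), ?_, fun v hv => by simpa using hv, ?_⟩
    · rw [chainComplex, Set.mem_ofPred_eq, coe_filter_univ]
      exact hc
    · simpa [sum_filter_ne_zero] using hsum

open Classical in
noncomputable def massAbove (μ : P → ℝ) (v : P) : ℝ :=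
  ∑ w with v < w, μ w

/-- Stacking the vertices of a chain from the top down, each `v` occupying an interval of
length `μ v`, `topPart t μ v` is the part of the mass of `v` lying within depth `t`. -/
noncomputable def topPart (t : ℝ) (μ : P → ℝ) (v : P) : ℝ :=
  min (μ v) (max 0 (t - massAbove μ v))

variable {μ : P → ℝ}

lemma topPart_nonneg (hμ : ∀ v, 0 ≤ μ v) (t : ℝ) (v : P) : 0 ≤ topPart t μ v :=
  le_min (hμ v) (le_max_left _ _)

lemma topPart_le (t : ℝ) (μ : P → ℝ) (v : P) : topPart t μ v ≤ μ v :=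
  min_le_left _ _

lemma massAbove_nonneg (hμ : ∀ v, 0 ≤ μ v) (v : P) : 0 ≤ massAbove μ v :=
  sum_nonneg fun w _ => hμ w

lemma add_massAbove_le_massAbove (hμ : ∀ v, 0 ≤ μ v) {v w : P} (hwv : w < v) :
    μ v + massAbove μ v ≤ massAbove μ w := by
  classical
  have hsub : insert v (univ.filter (v < ·)) ⊆ univ.filter (w < ·) := by
    intro u hu
    rcases mem_insert.1 hu with rfl | hu
    · simpa using hwv
    · simpa using hwv.trans (by simpa using hu)
  simpa [massAbove, sum_insert] using sum_le_sum_of_subset_of_nonneg hsub fun u _ _ => hμ u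

lemma topPart_zero (hμ : ∀ v, 0 ≤ μ v) : topPart 0 μ = 0 := by
  ext v
  rw [topPart, zero_sub, max_eq_left (neg_nonpos.2 (massAbove_nonneg hμ v)), min_eq_right (hμ v)]
  rfl

lemma topPart_one (hμ : ∀ v, 0 ≤ μ v) (hsum : ∑ v, μ v = 1) : topPart 1 μ = μ := by
  classical
  ext v
  have hle : μ v + massAbove μ v ≤ 1 := by
    rw [← hsum, massAbove, ← sum_insert (by simp)]
    exact sum_le_sum_of_subset_of_nonneg (subset_univ _) fun u _ _ => hμ u
  exact min_eq_left (le_max_of_le_right (by linarith))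

lemma topPart_eq_of_lt (hμ : ∀ v, 0 ≤ μ v) {t : ℝ} {v w : P} (hwv : w < v)
    (hw : topPart t μ w ≠ 0) : topPart t μ v = μ v := by
  have hpos : 0 < max 0 (t - massAbove μ w) :=
    ((topPart_nonneg hμ t w).lt_of_ne' hw).trans_le (min_le_right _ _)
  have ht : massAbove μ w < t := by
    linarith [(lt_max_iff.1 hpos).resolve_left (lt_irrefl 0)]
  exact min_eq_left (le_max_of_le_right (by linarith [add_massAbove_le_massAbove hμ hwv]))

lemma continuous_topPart : Continuous fun tμ : ℝ × (P → ℝ) => topPart tμ.1 tμ.2 := by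
  unfold topPart massAbove
  fun_prop

noncomputable def slidePushforward (f g : P → Q) (t : ℝ) (μ : P → ℝ) : Q → ℝ :=
  pushforward f (μ - topPart t μ) + pushforward g (topPart t μ)

lemma support_sub_topPart_union_subset (hμ : ∀ v, 0 ≤ μ v) (t : ℝ) :
    support (μ - topPart t μ) ∪ support (topPart t μ) ⊆ support μ := by
  rintro v hv hμv
  have h0 : topPart t μ v = 0 :=
    le_antisymm (hμv ▸ topPart_le t μ v) (topPart_nonneg hμ t v)
  rcases hv with hv | hv
  · exact hv (by simp [hμv, h0])
  · exact hv h0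

variable [PartialOrder Q]

lemma isChain_support_slidePushforward {f g : P → Q} (hf : Monotone f) (hg : Monotone g)
    (hfg : f ≤ g) (hμ : ∀ v, 0 ≤ μ v) (hc : IsChain (· ≤ ·) (support μ)) (t : ℝ) :
    IsChain (· ≤ ·) (support (slidePushforward f g t μ)) := by
  refine (IsChain.image_union_image hf hg hfg (hc.mono (support_sub_topPart_union_subset hμ t))
    fun v hv w hw hwv => hv ?_).mono ?_
  · simp [topPart_eq_of_lt hμ hwv hw]
  · exact (support_add _ _).trans (Set.union_subset_union
      (support_pushforward_subset _ _) (support_pushforward_subset _ _))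

variable [Fintype Q]

lemma pushforward_mem {f : P → Q} (hf : Monotone f) (p : geomReal (chainComplex P)) :
    (∀ q, 0 ≤ pushforward f p.1 q) ∧ ∃ s ∈ chainComplex Q,
      (∀ q, pushforward f p.1 q ≠ 0 → q ∈ s) ∧ ∑ q ∈ s, pushforward f p.1 q = 1 := by
  obtain ⟨hμ, hsum, hc⟩ := geomReal_chainComplex_iff.1 p.2
  exact geomReal_chainComplex_iff.2 ⟨pushforward_nonneg f hμ, by rw [sum_pushforward, hsum],
    (hf.isChain_image hc).mono (support_pushforward_subset f _)⟩

lemma slidePushforward_mem {f g : P → Q} (hf : Monotone f) (hg : Monotone g) (hfg : f ≤ g)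
    (t : ℝ) (p : geomReal (chainComplex P)) :
    (∀ q, 0 ≤ slidePushforward f g t p.1 q) ∧ ∃ s ∈ chainComplex Q,
      (∀ q, slidePushforward f g t p.1 q ≠ 0 → q ∈ s) ∧
        ∑ q ∈ s, slidePushforward f g t p.1 q = 1 := by
  obtain ⟨hμ, hsum, hc⟩ := geomReal_chainComplex_iff.1 p.2
  refine geomReal_chainComplex_iff.2 ⟨fun q => add_nonneg ?_ ?_, ?_,
    isChain_support_slidePushforward hf hg hfg hμ hc t⟩
  · exact pushforward_nonneg f (fun v => sub_nonneg.2 (topPart_le t _ v)) q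
  · exact pushforward_nonneg g (topPart_nonneg hμ t) q
  · simp [slidePushforward, sum_add_distrib, sum_pushforward, hsum]

noncomputable def pushforwardMap {f : P → Q} (hf : Monotone f) :
    C(geomReal (chainComplex P), geomReal (chainComplex Q)) where
  toFun p := ⟨pushforward f p.1, pushforward_mem hf p⟩
  continuous_toFun := (continuous_pushforward f).comp continuous_subtype_val |>.subtype_mk _

noncomputable def pushforwardHomotopy {f g : P → Q} (hf : Monotone f) (hg : Monotone g)
    (hfg : f ≤ g) : (pushforwardMap hf).Homotopy (pushforwardMap hg) where
  toFun tp := ⟨slidePushforward f g tp.1 tp.2.1, slidePushforward_mem hf hg hfg tp.1 tp.2⟩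
  continuous_toFun := by
    refine Continuous.subtype_mk ?_ _
    have hslide : Continuous fun tμ : ℝ × (P → ℝ) => slidePushforward f g tμ.1 tμ.2 :=
      ((continuous_pushforward f).comp (continuous_snd.sub continuous_topPart)).add
        ((continuous_pushforward g).comp continuous_topPart)
    exact hslide.comp ((continuous_subtype_val.comp continuous_fst).prodMk
      (continuous_subtype_val.comp continuous_snd))
  map_zero_left p := Subtype.ext <| by
    simp [slidePushforward, pushforwardMap, topPart_zero p.2.1, pushforward_zero]
  map_one_left p := Subtype.ext <| by
    obtain ⟨hμ, hsum, -⟩ := geomReal_chainComplex_iff.1 p.2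
    simp [slidePushforward, pushforwardMap, topPart_one hμ hsum, pushforward_zero]

end OrderComplex

section Conical

variable {P : Type*} [PartialOrder P] [Fintype P]

lemma pushforwardMap_id :
    pushforwardMap (monotone_id (α := P)) = ContinuousMap.id _ := by
  ext p : 2
  simp [pushforwardMap, pushforward_id]

noncomputable def chainComplexVertex [DecidableEq P] (x₀ : P) : geomReal (chainComplex P) :=
  ⟨Pi.single x₀ 1, geomReal_chainComplex_iff.2
    ⟨fun v => by simp [Pi.single_apply]; positivity, by simp, by simp⟩⟩

lemma pushforwardMap_const [DecidableEq P] (x₀ : P) :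
    pushforwardMap (monotone_const (c := x₀) (α := P)) =
      ContinuousMap.const _ (chainComplexVertex x₀) := by
  ext p : 2
  obtain ⟨-, hsum, -⟩ := geomReal_chainComplex_iff.1 p.2
  simp [pushforwardMap, chainComplexVertex, pushforward_const x₀ hsum]

theorem contractibleSpace_geomReal_chainComplex_of_conical (c : P → P) (hc : Monotone c)
    (x₀ : P) (hle : ∀ p, p ≤ c p) (hx₀ : ∀ p, x₀ ≤ c p) :
    ContractibleSpace (geomReal (chainComplex P)) := by
  classical
  rw [contractible_iff_id_nullhomotopic]
  refine ⟨chainComplexVertex x₀, ?_⟩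
  have hid : (pushforwardMap monotone_id).Homotopic (pushforwardMap hc) :=
    ⟨pushforwardHomotopy _ _ hle⟩
  have hconst : (pushforwardMap monotone_const).Homotopic (pushforwardMap hc) :=
    ⟨pushforwardHomotopy _ _ hx₀⟩
  simpa only [pushforwardMap_id, pushforwardMap_const] using hid.trans hconst.symm

end Conical

lemma exists_isLUB_of_bddAbove {L : Type*} [SemilatticeInf L] [Finite L] {A : Set L}
    (hA : BddAbove A) : ∃ j, IsLUB A j := by
  have hU := Set.toFinite (upperBounds A)
  refine ⟨hU.toFinset.inf' (hU.toFinset_nonempty.2 hA) id, fun a ha => le_inf' _ _ fun u hu => ?_,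
    fun u hu => inf'_le _ (by simpa using hu)⟩
  exact (hU.mem_toFinset.1 hu) ha

lemma exists_isLUB_le {L : Type*} [SemilatticeInf L] [Finite L] {A : Set L} {X : L}
    (hA : ∀ a ∈ A, a ≤ X) : ∃ j, IsLUB A j ∧ j ≤ X :=
  (exists_isLUB_of_bddAbove ⟨X, hA⟩).imp fun _ hj => ⟨hj, hj.2 hA⟩

section Nested

variable {G : Set L} {S : Finset L}

lemma isNested_singleton [PartialOrder L] {g : L} (hg : g ∈ G) : IsNested G {g} := by
  refine ⟨by simpa using hg, fun A hA _ hcard => ?_⟩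
  have := card_le_card hA
  simp only [card_singleton] at this
  omega

/-- The join is that of the antichain of maximal elements. -/
lemma IsNested.exists_isLUB [PartialOrder L] (hS : IsNested G S) (hne : S.Nonempty) :
    ∃ j, IsLUB (S : Set L) j := by
  classical
  set M := S.filter (Maximal (· ∈ S))
  have hub : upperBounds (S : Set L) = upperBounds (M : Set L) := by
    ext u
    refine ⟨fun hu m hm => hu (mem_filter.1 hm).1, fun hu s hs => ?_⟩
    obtain ⟨m, hsm, hm⟩ := S.exists_le_maximal hs
    exact hsm.trans (hu (mem_filter.2 ⟨hm.prop, hm⟩))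
  simp only [isLUB_congr hub]
  obtain ⟨s, hs⟩ := hne
  obtain ⟨m, -, hm⟩ := S.exists_le_maximal hs
  have hmM : m ∈ M := mem_filter.2 ⟨hm.prop, hm⟩
  rcases (one_le_card.2 ⟨m, hmM⟩).eq_or_lt with hcard | hcard
  · obtain ⟨m', hm'⟩ := card_eq_one.1 hcard.symm
    exact ⟨m', by simp [hm']⟩
  · obtain ⟨j, hj, -⟩ := hS.2 M (filter_subset _ _)
      ((setOfPred_maximal_antichain _).subset fun x hx => (mem_filter.1 hx).2) hcard
    exact ⟨j, hj⟩

lemma IsNested.insert [SemilatticeInf L] [Finite L] [DecidableEq L] {X g : L} (hS : IsNested G S)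
    (hSX : ∀ s ∈ S, s ≤ X) (hg : g ∈ factorsSet G X) : IsNested G (insert g S) := by
  refine ⟨by simpa [Set.insert_subset_iff] using ⟨hg.1, hS.1⟩, fun A hA hanti hcard => ?_⟩
  have hAX : ∀ a ∈ (A : Set L), a ≤ X := fun a ha =>
    (mem_insert.1 (hA ha)).elim (fun h => h.le.trans hg.2.1) (hSX a)
  obtain ⟨J, hJ, hJX⟩ := exists_isLUB_le hAX
  refine ⟨J, hJ, fun hJG => ?_⟩
  by_cases hgA : g ∈ A
  · -- by maximality of `g`, the join `J ≥ g` equals `g`, which then dominates the antichain `A`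
    have hgJ : g = J := hg.2.2 J hJG hJX (hJ.1 hgA)
    have hAg : A ⊆ {g} := fun a ha => mem_singleton.2 (hanti.eq ha hgA (hgJ ▸ hJ.1 ha))
    have := card_le_card hAg
    simp only [card_singleton] at this
    omega
  · obtain ⟨j, hj, hjG⟩ := hS.2 A
      (fun a ha => (mem_insert.1 (hA ha)).resolve_left (ne_of_mem_of_not_mem ha hgA)) hanti hcard
    exact hjG (hj.unique hJ ▸ hJG)

end Nested

lemma IsBuilding.factorsSet_nonempty [PartialOrder L] [OrderBot L] {G : Set L}
    (hG : IsBuilding L G) {X : L} (hX : X ≠ ⊥) : (factorsSet G X).Nonempty := by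
  by_contra h
  have : IsEmpty (factorsSet G X) := Set.isEmpty_coe_sort.2 (Set.not_nonempty_iff_eq_empty.1 h)
  obtain ⟨φ, -⟩ := hG.2 X hX
  exact hX (congrArg Subtype.val (φ.symm.injective
    (Subsingleton.elim (φ.symm ⟨⊥, le_rfl, bot_le⟩) (φ.symm ⟨X, bot_le, le_rfl⟩)))).symm

namespace NestedFiber

variable [SemilatticeInf L] {G : Set L} {X g : L}

instance [Finite L] : Finite (NestedFiber G X) := by
  unfold NestedFiber
  infer_instance

lemma le_of_mem (S : NestedFiber G X) : ∀ s ∈ S.1, s ≤ X := by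
  obtain ⟨-, -, j, hj, hjX⟩ := S.2
  exact fun s hs => (hj.1 hs).trans hjX

def single (hg : g ∈ factorsSet G X) : NestedFiber G X :=
  ⟨{g}, isNested_singleton hg.1, singleton_nonempty g, g, by simp, hg.2.1⟩

def insertFactor [Finite L] [DecidableEq L] (hg : g ∈ factorsSet G X) (S : NestedFiber G X) :
    NestedFiber G X :=
  ⟨insert g S.1, S.2.1.insert S.le_of_mem hg, insert_nonempty _ _, exists_isLUB_le fun a ha =>
    (mem_insert.1 ha).elim (fun h => h.le.trans hg.2.1) (S.le_of_mem a)⟩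

end NestedFiber

/-- The map `S ↦ ⋁S` is a well-defined order-preserving map from
the face poset of `N(L,G)` to `L \ {⊥}`, and each fiber
`φ⁻¹((L \ {⊥})_{≤X})` has contractible order complex. -/
theorem stmt7 (L : Type*) [SemilatticeInf L] [OrderBot L] [Fintype L]
    (G : Set L) (hG : IsBuilding L G) :
    (∀ S : Finset L, IsNested G S → S.Nonempty → ∃ j, IsLUB (S : Set L) j ∧ j ≠ ⊥) ∧
    (∀ S T : Finset L, IsNested G S → IsNested G T → S.Nonempty → S ⊆ T →
      ∀ jS jT : L, IsLUB (S : Set L) jS → IsLUB (T : Set L) jT → jS ≤ jT) ∧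
    (∀ X : L, X ≠ ⊥ →
      ContractibleSpace (geomReal (chainComplex (NestedFiber G X)))) := by
  classical
  refine ⟨fun S hS hne => ?_, fun S T _ _ _ hST jS jT hjS hjT => hjS.2 fun s hs => hjT.1 (hST hs),
    fun X hX => ?_⟩
  · obtain ⟨j, hj⟩ := hS.exists_isLUB hne
    obtain ⟨s, hs⟩ := hne
    exact ⟨j, hj, fun hj0 => hG.1 s (hS.1 hs) (le_bot_iff.1 (hj0 ▸ hj.1 hs))⟩
  · obtain ⟨g, hg⟩ := hG.factorsSet_nonempty hX
    have : Fintype (NestedFiber G X) := Fintype.ofFinite _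
    exact contractibleSpace_geomReal_chainComplex_of_conical (NestedFiber.insertFactor hg)
      (fun S T hST => insert_subset_insert g hST) (NestedFiber.single hg)
      (fun S => subset_insert g S.1) (fun S => singleton_subset_iff.2 (mem_insert_self g S.1))
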